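/- arXiv:2505.09584 — 5 statements merged into one kernel-verified Lean document; each statement's English description precedes it below -/
import Mathlib

section
/- Let P ⊆ R^q be a set that is closed under coordinatewise maximum and under addition of constant multiples of the all-ones vector, and suppose V ⊆ P is a finite set such that every point of P is of the form max_i (λ_i·1 + v_i) for some reals λ_i and v_i ∈ V (a tropical polytope with vertex set V). For x ∈ R^q, define π(x) to be the coordinatewise maximum over v ∈ V of (min_e (x_e - v_e))·1 + v. Then π(x) ∈ P, π(x) ≤ x coordinatewise, and d_tr(x, π(x)) ≤ d_tr(x, y) for every y ∈ P. -/
/-- The tropical symmetric distance on `ℝ^q`. -/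
noncomputable def dtr (q : ℕ) [NeZero q] (x y : Fin q → ℝ) : ℝ :=
  (Finset.univ.sup' Finset.univ_nonempty fun i => y i - x i) -
  (Finset.univ.inf' Finset.univ_nonempty fun i => y i - x i)

/-- The all-ones vector in `ℝ^q`. -/
def ones (q : ℕ) : Fin q → ℝ := fun _ => 1

/-- The tropical projection onto the tropical polytope generated by `v 1, …, v r`. -/
noncomputable def tproj (q r : ℕ) [NeZero q] [NeZero r] (v : Fin r → Fin q → ℝ)
    (x : Fin q → ℝ) : Fin q → ℝ :=
  fun j => Finset.univ.sup' Finset.univ_nonempty fun i =>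
    (Finset.univ.inf' Finset.univ_nonempty fun e => x e - v i e) + v i j

/-!
Every tropical combination `max_i (λ_i·1 + v_i)` lying below `x` has `λ_i ≤ min_e (x_e - v_{i,e})`,
so `π(x)` is the largest point of `P` below `x`. Given `y ∈ P`, shift it down by
`c = min_e (x_e - y_e)`: the shifted point `y'` lies in `P`, below `x`, and touches `x` in some
coordinate, so `y' ≤ π(x) ≤ x`. For `w` between such a `y'` and `x` one has
`d_tr(x, w) ≤ -min_e (w_e - x_e) ≤ -min_e (y'_e - x_e) = d_tr(x, y')`, and `d_tr` ignores shifts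
along `1`.
-/

noncomputable def tcomb {q r : ℕ} [NeZero r] (v : Fin r → Fin q → ℝ) (lam : Fin r → ℝ) :
    Fin q → ℝ :=
  fun j => Finset.univ.sup' Finset.univ_nonempty fun i => lam i + v i j

section Distance

variable {q : ℕ} [NeZero q]

theorem dtr_add_smul_ones (x y : Fin q → ℝ) (c : ℝ) :
    dtr q x (y + c • ones q) = dtr q x y := by
  have hshift : (fun i => (y + c • ones q) i - x i) = fun i => (y i - x i) + c := by
    funext i
    simp only [Pi.add_apply, Pi.smul_apply, ones, smul_eq_mul, mul_one]
    ring
  have hinf : (Finset.univ.inf' Finset.univ_nonempty fun i => (y i - x i) + c) =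
      (Finset.univ.inf' Finset.univ_nonempty fun i => y i - x i) + c :=
    (map_finset_inf' (OrderIso.addRight c) Finset.univ_nonempty _).symm
  rw [dtr, dtr, hshift, ← Finset.sup'_add, hinf]
  ring

theorem exists_add_smul_ones_le_and_eq (x y : Fin q → ℝ) :
    ∃ c : ℝ, y + c • ones q ≤ x ∧ ∃ j, (y + c • ones q) j = x j := by
  obtain ⟨j, -, hj⟩ := Finset.exists_mem_eq_inf' Finset.univ_nonempty fun e => x e - y e
  refine ⟨Finset.univ.inf' Finset.univ_nonempty fun e => x e - y e, fun e => ?_, j, ?_⟩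
  · have := Finset.inf'_le (fun e => x e - y e) (Finset.mem_univ e)
    simp only [Pi.add_apply, Pi.smul_apply, ones, smul_eq_mul, mul_one]
    linarith
  · simp only [Pi.add_apply, Pi.smul_apply, ones, smul_eq_mul, mul_one, hj]
    ring

theorem dtr_le_of_le_of_le {x w z : Fin q → ℝ} (hwx : w ≤ x) (hzw : z ≤ w)
    (htouch : ∃ j, z j = x j) : dtr q x w ≤ dtr q x z := by
  obtain ⟨j, hj⟩ := htouch
  have hsup_w : (Finset.univ.sup' Finset.univ_nonempty fun i => w i - x i) ≤ 0 :=
    Finset.sup'_le _ _ fun i _ => sub_nonpos.mpr (hwx i)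
  have hsup_z : 0 ≤ Finset.univ.sup' Finset.univ_nonempty fun i => z i - x i :=
    Finset.le_sup'_of_le _ (Finset.mem_univ j) (by rw [hj, sub_self])
  have hinf : (Finset.univ.inf' Finset.univ_nonempty fun i => z i - x i) ≤
      Finset.univ.inf' Finset.univ_nonempty fun i => w i - x i :=
    Finset.inf'_mono_fun fun i _ => sub_le_sub_right (hzw i) _
  rw [dtr, dtr]
  linarith

end Distance

section Projection

variable {q r : ℕ} [NeZero r]

theorem tproj_eq_tcomb [NeZero q] (v : Fin r → Fin q → ℝ) (x : Fin q → ℝ) :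
    tproj q r v x = tcomb v fun i => Finset.univ.inf' Finset.univ_nonempty fun e => x e - v i e :=
  rfl

theorem tproj_le [NeZero q] (v : Fin r → Fin q → ℝ) (x : Fin q → ℝ) : tproj q r v x ≤ x :=
  fun j => Finset.sup'_le _ _ fun i _ => by
    have := Finset.inf'_le (fun e => x e - v i e) (Finset.mem_univ j)
    linarith

theorem tcomb_le_tproj [NeZero q] {v : Fin r → Fin q → ℝ} {lam : Fin r → ℝ} {x : Fin q → ℝ}
    (h : tcomb v lam ≤ x) :
    tcomb v lam ≤ tproj q r v x := fun j =>
  Finset.sup'_le _ _ fun i _ => by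
    have hlam : lam i ≤ Finset.univ.inf' Finset.univ_nonempty fun e => x e - v i e :=
      Finset.le_inf' _ _ fun e _ => le_sub_iff_add_le.mpr <|
        (Finset.le_sup' (fun i => lam i + v i e) (Finset.mem_univ i)).trans (h e)
    exact Finset.le_sup'_of_le (fun i => (Finset.univ.inf' _ fun e => x e - v i e) + v i j)
      (Finset.mem_univ i) (by linarith)

theorem tcomb_mem {v : Fin r → Fin q → ℝ} {P : Set (Fin q → ℝ)}
    (hmax : ∀ a ∈ P, ∀ b ∈ P, (fun j => max (a j) (b j)) ∈ P)
    (hone : ∀ a ∈ P, ∀ c : ℝ, a + c • ones q ∈ P) (hV : ∀ i, v i ∈ P) (lam : Fin r → ℝ) :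
    tcomb v lam ∈ P := by
  have hsup :
      tcomb v lam = Finset.univ.sup' Finset.univ_nonempty fun i => lam i • ones q + v i := by
    funext j
    simp [tcomb, Finset.sup'_apply, ones]
  rw [hsup]
  refine Finset.sup'_induction _ _ (fun a ha b hb => hmax a ha b hb) fun i _ => ?_
  rw [add_comm]
  exact hone _ (hV i) _

end Projection

theorem stmt5 (q r : ℕ) [NeZero q] [NeZero r] (P : Set (Fin q → ℝ))
    (v : Fin r → Fin q → ℝ)
    -- `P` is closed under coordinatewise maximum
    (hmax : ∀ a ∈ P, ∀ b ∈ P, (fun j => max (a j) (b j)) ∈ P)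
    -- `P` is closed under addition of constant multiples of the all-ones vector
    (hone : ∀ a ∈ P, ∀ c : ℝ, a + c • ones q ∈ P)
    -- the vertices lie in `P`
    (hV : ∀ i, v i ∈ P)
    -- every point of `P` is a tropical linear combination of the vertices
    (hgen : ∀ p ∈ P, ∃ lam : Fin r → ℝ,
      p = fun j => Finset.univ.sup' Finset.univ_nonempty fun i => lam i + v i j)
    (x : Fin q → ℝ) :
    tproj q r v x ∈ P ∧ (∀ j, tproj q r v x j ≤ x j) ∧
      ∀ y ∈ P, dtr q x (tproj q r v x) ≤ dtr q x y := by
  refine ⟨tproj_eq_tcomb v x ▸ tcomb_mem hmax hone hV _, tproj_le v x, fun y hy => ?_⟩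
  obtain ⟨c, hzx, htouch⟩ := exists_add_smul_ones_le_and_eq x y
  obtain ⟨lam, hlam⟩ := hgen _ (hone y hy c)
  have hz : y + c • ones q ≤ tproj q r v x := by
    rw [hlam] at hzx ⊢
    exact tcomb_le_tproj hzx
  calc dtr q x (tproj q r v x) ≤ dtr q x (y + c • ones q) :=
        dtr_le_of_le_of_le (tproj_le v x) hz htouch
    _ = dtr q x y := dtr_add_smul_ones x y c
end

section
/- Let B ⊆ R^q be a nonempty closed set and π: R^q → B a map satisfying: (i) π(x) = x for all x ∈ B, and (ii) d_tr(π(x), π(y)) ≤ d_tr(x, y) for all x, y. Let v_1, ..., v_n ∈ B and let FW denote the set of minimizers over R^q of f(x) = Σ_j d_tr(x, v_j). Then π(FW) = FW ∩ B; in particular, if FW is nonempty then FW ∩ B is nonempty. -/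
/-- The set of Fermat-Weber points of the points `v 1, …, v n` with respect to `dtr`. -/
noncomputable def FW (q n : ℕ) [NeZero q] (v : Fin n → Fin q → ℝ) : Set (Fin q → ℝ) :=
  {x | ∀ z : Fin q → ℝ, ∑ j, dtr q x (v j) ≤ ∑ j, dtr q z (v j)}

theorem stmt7 (q n : ℕ) [NeZero q] (B : Set (Fin q → ℝ)) (hBne : B.Nonempty)
    (hBclosed : IsClosed B) (π : (Fin q → ℝ) → (Fin q → ℝ))
    (hrange : ∀ x, π x ∈ B) (hfix : ∀ x ∈ B, π x = x)
    (hnonexp : ∀ x y, dtr q (π x) (π y) ≤ dtr q x y)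
    (v : Fin n → Fin q → ℝ) (hv : ∀ j, v j ∈ B) :
    π '' FW q n v = FW q n v ∩ B ∧
      ((FW q n v).Nonempty → (FW q n v ∩ B).Nonempty) := by
  have key : ∀ x ∈ FW q n v, π x ∈ FW q n v := by
    intro x hx z
    have h1 : ∑ j, dtr q (π x) (v j) ≤ ∑ j, dtr q x (v j) := by
      apply Finset.sum_le_sum
      intro j _
      have := hnonexp x (v j)
      rwa [hfix (v j) (hv j)] at this
    exact h1.trans (hx z)
  have himg : π '' FW q n v = FW q n v ∩ B := by
    ext y
    constructor
    · rintro ⟨x, hx, rfl⟩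
      exact ⟨key x hx, hrange x⟩
    · rintro ⟨hy, hyB⟩
      exact ⟨y, hy, hfix y hyB⟩
  refine ⟨himg, ?_⟩
  rintro ⟨x, hx⟩
  exact ⟨π x, key x hx, hrange x⟩
end

section
/- Let M be a loopless connected matroid on ground set [q], let K be a maximal cone of the Bergman fan of M (with the nested set fan structure), and let w be in the relative interior of K. Set w_min = min over circuits C with non-constant w|_C of (max^1_{e∈C} w_e − max^2_{e∈C} w_e), where max^1 and max^2 denote the largest and second-largest distinct values. Then every u in the Bergman fan with d_tr(u, w) < w_min lies in the relative interior of K. -/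
/-- A circuit of a matroid: a minimal dependent set. -/
def IsCircuit {α : Type*} (M : Matroid α) (C : Set α) : Prop :=
  M.Dep C ∧ ∀ D ⊂ C, ¬ M.Dep D

/-- A loopless matroid: every singleton of the ground set is independent. -/
def Loopless {α : Type*} (M : Matroid α) : Prop :=
  ∀ a ∈ M.E, M.Indep {a}

/-- A connected matroid: any two distinct ground-set elements lie in a common circuit. -/
def Connected {α : Type*} (M : Matroid α) : Prop :=
  ∀ a ∈ M.E, ∀ b ∈ M.E, a ≠ b → ∃ C, IsCircuit M C ∧ a ∈ C ∧ b ∈ C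

/-- The set of elements of `C` at which `w` attains its maximum over `C`. -/
def argmaxOn {α : Type*} (C : Set α) (w : α → ℝ) : Set α :=
  {e ∈ C | ∀ f ∈ C, w f ≤ w e}

/-- Membership in the Bergman fan of a matroid `M`. -/
def InBergmanFan {α : Type*} (M : Matroid α) (w : α → ℝ) : Prop :=
  ∀ C, IsCircuit M C → (argmaxOn C w).Nontrivial

/-- The largest value of `w` on `C`. -/
noncomputable def max1 {α : Type*} (C : Set α) (w : α → ℝ) : ℝ := sSup (w '' C)

/-- The second-largest distinct value of `w` on `C`. -/
noncomputable def max2 {α : Type*} (C : Set α) (w : α → ℝ) : ℝ :=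
  sSup ((w '' C) \ {max1 C w})

/-- `w` is non-constant on `C`. -/
def NonconstOn {α : Type*} (C : Set α) (w : α → ℝ) : Prop :=
  ∃ a ∈ C, ∃ b ∈ C, w a ≠ w b

/-- `w_min`: the minimum, over circuits on which `w` is non-constant,
of the gap between the largest and second-largest values of `w` on the circuit. -/
noncomputable def wMin {α : Type*} (M : Matroid α) (w : α → ℝ) : ℝ :=
  sInf {d : ℝ | ∃ C, IsCircuit M C ∧ NonconstOn C w ∧ d = max1 C w - max2 C w}

section MaxValues

variable {α : Type*} {C : Set α} {w : α → ℝ}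

theorem max1_eq_of_forall_le {g : α} (hg : g ∈ C) (hmax : ∀ f ∈ C, w f ≤ w g) :
    max1 C w = w g :=
  IsGreatest.csSup_eq ⟨Set.mem_image_of_mem w hg, Set.forall_mem_image.2 hmax⟩

theorem Set.Finite.exists_max1_eq (hC : C.Finite) (hne : C.Nonempty) :
    ∃ g ∈ C, max1 C w = w g := by
  obtain ⟨g, hg, hmax⟩ := Set.exists_max_image C w hC hne
  exact ⟨g, hg, max1_eq_of_forall_le hg hmax⟩

theorem le_max1 (hC : C.Finite) {f : α} (hf : f ∈ C) : w f ≤ max1 C w :=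
  le_csSup (hC.image w).bddAbove (Set.mem_image_of_mem w hf)

theorem le_max2_of_lt_max1 (hC : C.Finite) {e : α} (he : e ∈ C) (hlt : w e < max1 C w) :
    w e ≤ max2 C w :=
  le_csSup ((hC.image w).sdiff).bddAbove ⟨Set.mem_image_of_mem w he, hlt.ne⟩

theorem wMin_le [Finite α] {M : Matroid α} (hC : IsCircuit M C) (hnc : NonconstOn C w) :
    wMin M w ≤ max1 C w - max2 C w := by
  have hfin : {d : ℝ | ∃ D, IsCircuit M D ∧ NonconstOn D w ∧ d = max1 D w - max2 D w}.Finite :=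
    (Set.finite_range fun D : Set α => max1 D w - max2 D w).subset <| by
      rintro d ⟨D, -, -, rfl⟩
      exact ⟨D, rfl⟩
  exact csInf_le hfin.bddBelow ⟨C, hC, hnc, rfl⟩

end MaxValues

theorem sub_sub_sub_le_dtr {q : ℕ} [NeZero q] (u w : Fin q → ℝ) (i j : Fin q) :
    (w i - u i) - (w j - u j) ≤ dtr q u w := by
  have hi := Finset.le_sup' (fun k => w k - u k) (Finset.mem_univ i)
  have hj := Finset.inf'_le (fun k => w k - u k) (Finset.mem_univ j)
  unfold dtr
  linarith

theorem argmaxOn_subset_of_dtr_lt_wMin {q : ℕ} [NeZero q] {M : Matroid (Fin q)}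
    {u w : Fin q → ℝ} (hdist : dtr q u w < wMin M w) {C : Set (Fin q)} (hC : IsCircuit M C) :
    argmaxOn C u ⊆ argmaxOn C w := by
  rintro e ⟨he, hu_max⟩
  have hfin : C.Finite := C.toFinite
  suffices hmax1 : w e = max1 C w from
    ⟨he, fun f hf => hmax1 ▸ le_max1 hfin hf⟩
  refine (le_max1 hfin he).eq_of_not_lt fun hlt => ?_
  obtain ⟨g, hg, hg_max⟩ := hfin.exists_max1_eq (w := w) ⟨e, he⟩
  have hgap : wMin M w ≤ w g - w e := calc
    wMin M w ≤ max1 C w - max2 C w := wMin_le hC ⟨g, hg, e, he, by linarith⟩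
    _ ≤ w g - w e := by linarith [le_max2_of_lt_max1 hfin he hlt]
  have hshift := sub_sub_sub_le_dtr u w g e
  linarith [hu_max g hg]

theorem stmt9_general (q : ℕ) [NeZero q] (M : Matroid (Fin q))
    (w : Fin q → ℝ)
    -- `w` lies in the relative interior of a *maximal* cone of the nested set fan:
    -- any fan point whose argmax sets are contained in those of `w` has the same argmax sets.
    (hmaxcone : ∀ u, InBergmanFan M u →
      (∀ C, IsCircuit M C → argmaxOn C u ⊆ argmaxOn C w) →
      ∀ C, IsCircuit M C → argmaxOn C u = argmaxOn C w) :
    ∀ u, InBergmanFan M u → dtr q u w < wMin M w →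
      ∀ C, IsCircuit M C → argmaxOn C u = argmaxOn C w :=
  fun u hu hdist => hmaxcone u hu fun _ hC => argmaxOn_subset_of_dtr_lt_wMin hdist hC

theorem stmt9 (q : ℕ) [NeZero q] (M : Matroid (Fin q)) (hE : M.E = Set.univ)
    (hloopless : Loopless M) (hconn : Connected M)
    (w : Fin q → ℝ) (hw : InBergmanFan M w)
    -- `w` lies in the relative interior of a *maximal* cone of the nested set fan:
    -- any fan point whose argmax sets are contained in those of `w` has the same argmax sets.
    (hmaxcone : ∀ u, InBergmanFan M u →
      (∀ C, IsCircuit M C → argmaxOn C u ⊆ argmaxOn C w) →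
      ∀ C, IsCircuit M C → argmaxOn C u = argmaxOn C w) :
    ∀ u, InBergmanFan M u → dtr q u w < wMin M w →
      ∀ C, IsCircuit M C → argmaxOn C u = argmaxOn C w :=
  stmt9_general q M w hmaxcone
end

section
/- Let v ∈ R^q, y ∈ R^q, and let ∅ ⊂ U_1 ⊂ U_2 ⊂ ... ⊂ U_k ⊂ [q] be a strictly increasing chain of subsets with indicator vectors u_i = 1_{U_i}. Let λ_1, ..., λ_k ≥ 0 with Σ_i λ_i = 1. Then for all sufficiently small t > 0, d_tr(y + t·Σ_i λ_i u_i, v) = Σ_i λ_i · d_tr(y + t·u_i, v). -/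
/-!
Write `g = v - y`, so that `d_tr(y + t w, v) = max (g - t w) - min (g - t w)`. For `0 ≤ w ≤ 1` and
`t` below the gaps between the extreme values of `g` and the other values, the maximum is still
attained among the maximizers of `g`, at one minimizing `w` there, and symmetrically for the
minimum. Because the `U i` form a chain, there is a maximizer `a₀` lying in the fewest `U i` and a
minimizer `b₀` lying in the most; `a₀` minimizes and `b₀` maximizes simultaneously every weight
that is monotone along the chain, i.e. every convex combination of the `1_{U i}`. With `a₀, b₀`
fixed, `d_tr(y + t w, v) = g a₀ - g b₀ - t (w a₀ - w b₀)` is affine in `w`, whence the identity.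
-/

open Finset

theorem Finite.exists_pos_le_of_pos {ι : Type*} [Finite ι] (f : ι → ℝ) :
    ∃ δ > 0, ∀ a, 0 < f a → δ ≤ f a := by
  by_cases h : ∃ a, 0 < f a
  · have : Nonempty {a // 0 < f a} := let ⟨a, ha⟩ := h; ⟨⟨a, ha⟩⟩
    obtain ⟨⟨a, ha⟩, hmin⟩ := Finite.exists_min fun b : {a // 0 < f a} => f b
    exact ⟨f a, ha, fun b hb => hmin ⟨b, hb⟩⟩
  · push Not at h
    exact ⟨1, one_pos, fun a ha => absurd ha (h a).not_gt⟩

theorem Finset.exists_mem_fewest_memberships_of_total {ι κ : Type*} [Fintype κ] {U : κ → Set ι}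
    (hU : ∀ i j, U i ⊆ U j ∨ U j ⊆ U i) {S : Finset ι} (hS : S.Nonempty) :
    ∃ a₀ ∈ S, ∀ a ∈ S, ∀ i, a₀ ∈ U i → a ∈ U i := by
  classical
  obtain ⟨a₀, ha₀, hmin⟩ := S.exists_min_image (fun a => #{i | a ∈ U i}) hS
  refine ⟨a₀, ha₀, fun a ha i ha₀i => by_contra fun hai => (hmin a ha).not_gt ?_⟩
  refine card_lt_card <| (ssubset_iff_of_subset fun j hj => ?_).2 ⟨i, by simpa, by simpa⟩
  simp only [mem_filter, mem_univ, true_and] at hj ⊢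
  exact (hU i j).elim (· ha₀i) fun hji => absurd (hji hj) hai

theorem Finset.exists_mem_most_memberships_of_total {ι κ : Type*} [Fintype κ] {U : κ → Set ι}
    (hU : ∀ i j, U i ⊆ U j ∨ U j ⊆ U i) {S : Finset ι} (hS : S.Nonempty) :
    ∃ b₀ ∈ S, ∀ a ∈ S, ∀ i, a ∈ U i → b₀ ∈ U i := by
  obtain ⟨b₀, hb₀, hmin⟩ := exists_mem_fewest_memberships_of_total (U := fun i => (U i)ᶜ)
    (fun i j => (hU j i).imp Set.compl_subset_compl.2 Set.compl_subset_compl.2) hS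
  exact ⟨b₀, hb₀, fun a ha i hai => by_contra fun hb₀i => hmin a ha i hb₀i hai⟩

section Perturbation

variable {ι : Type*} [Fintype ι] [Nonempty ι] {g w : ι → ℝ} {t : ℝ}

theorem Finset.sup'_sub_mul_eq {a₀ : ι} (hw : ∀ a, w a ∈ Set.Icc 0 1) (ht : 0 ≤ t)
    (hmax : ∀ a, g a ≤ g a₀) (hmin : ∀ a, g a = g a₀ → w a₀ ≤ w a)
    (hgap : ∀ a, g a < g a₀ → t ≤ g a₀ - g a) :
    univ.sup' univ_nonempty (fun a => g a - t * w a) = g a₀ - t * w a₀ := by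
  refine le_antisymm (sup'_le _ _ fun a _ => ?_) (le_sup' (fun a => g a - t * w a) (mem_univ a₀))
  rcases (hmax a).lt_or_eq with hlt | heq
  · nlinarith [hgap a hlt, mul_nonneg ht (hw a).1, mul_le_of_le_one_right ht (hw a₀).2]
  · nlinarith [hmin a heq]

theorem Finset.inf'_sub_mul_eq {b₀ : ι} (hw : ∀ a, w a ∈ Set.Icc 0 1) (ht : 0 ≤ t)
    (hmin : ∀ a, g b₀ ≤ g a) (hmax : ∀ a, g a = g b₀ → w a ≤ w b₀)
    (hgap : ∀ a, g b₀ < g a → t ≤ g a - g b₀) :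
    univ.inf' univ_nonempty (fun a => g a - t * w a) = g b₀ - t * w b₀ := by
  refine le_antisymm (inf'_le (fun a => g a - t * w a) (mem_univ b₀)) (le_inf' _ _ fun a _ => ?_)
  rcases (hmin a).lt_or_eq with hlt | heq
  · nlinarith [hgap a hlt, mul_nonneg ht (hw b₀).1, mul_le_of_le_one_right ht (hw a).2]
  · nlinarith [hmax a heq.symm]

end Perturbation

theorem dtr_add_smul_eq {q : ℕ} [NeZero q] {y v w : Fin q → ℝ} {t : ℝ} {a₀ b₀ : Fin q}
    (hw : ∀ a, w a ∈ Set.Icc 0 1) (ht : 0 ≤ t)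
    (hmax : ∀ a, (v - y) a ≤ (v - y) a₀) (hmin : ∀ a, (v - y) b₀ ≤ (v - y) a)
    (hwa₀ : ∀ a, (v - y) a = (v - y) a₀ → w a₀ ≤ w a)
    (hwb₀ : ∀ a, (v - y) a = (v - y) b₀ → w a ≤ w b₀)
    (hgapa₀ : ∀ a, (v - y) a < (v - y) a₀ → t ≤ (v - y) a₀ - (v - y) a)
    (hgapb₀ : ∀ a, (v - y) b₀ < (v - y) a → t ≤ (v - y) a - (v - y) b₀) :
    dtr q (y + t • w) v = (v - y) a₀ - (v - y) b₀ - t * (w a₀ - w b₀) := by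
  have hfun : (fun a => v a - (y + t • w) a) = fun a => (v - y) a - t * w a := by
    ext a; simp only [Pi.add_apply, Pi.sub_apply, Pi.smul_apply, smul_eq_mul]; ring
  rw [dtr, hfun, sup'_sub_mul_eq hw ht hmax hwa₀ hgapa₀, inf'_sub_mul_eq hw ht hmin hwb₀ hgapb₀]
  ring

def chainWeights {ι κ : Type*} (U : κ → Set ι) : Set (ι → ℝ) :=
  {w | (∀ a, w a ∈ Set.Icc 0 1) ∧ ∀ a b, (∀ i, a ∈ U i → b ∈ U i) → w a ≤ w b}

theorem convex_chainWeights {ι κ : Type*} (U : κ → Set ι) : Convex ℝ (chainWeights U) := by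
  rintro w ⟨hw, hwU⟩ w' ⟨hw', hwU'⟩ s s' hs hs' hss'
  refine ⟨fun a => ?_, fun a b hab => ?_⟩
  · simp only [Pi.add_apply, Pi.smul_apply, smul_eq_mul, Set.mem_Icc]
    obtain ⟨h0, h1⟩ := hw a
    obtain ⟨h0', h1'⟩ := hw' a
    constructor <;> nlinarith
  · simp only [Pi.add_apply, Pi.smul_apply, smul_eq_mul]
    nlinarith [mul_le_mul_of_nonneg_left (hwU a b hab) hs,
      mul_le_mul_of_nonneg_left (hwU' a b hab) hs']

theorem indicator_one_mem_chainWeights {ι κ : Type*} (U : κ → Set ι) (i : κ) :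
    (U i).indicator (fun _ => (1 : ℝ)) ∈ chainWeights U := by
  refine ⟨fun a => ?_, fun a b hab => ?_⟩
  · by_cases ha : a ∈ U i <;> simp [ha]
  · by_cases ha : a ∈ U i
    · simp [ha, hab i ha]
    · simp only [Set.indicator_of_notMem ha]
      exact Set.indicator_nonneg (fun _ _ => zero_le_one) b

theorem stmt13_general (q k : ℕ) [NeZero q] (v y : Fin q → ℝ)
    (U : Fin k → Set (Fin q))
    -- `∅ ⊂ U 1 ⊂ U 2 ⊂ ⋯ ⊂ U k ⊂ [q]`: a strictly increasing chain of
    -- nonempty proper subsets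
    (hchain : ∀ i j : Fin k, i < j → U i ⊂ U j)
    (lam : Fin k → ℝ) (hlam : ∀ i, 0 ≤ lam i) (hsum : ∑ i, lam i = 1) :
    ∃ t₀ > (0 : ℝ), ∀ t : ℝ, 0 < t → t < t₀ →
      dtr q (y + t • ∑ i, lam i • (U i).indicator (fun _ => (1 : ℝ))) v =
        ∑ i, lam i * dtr q (y + t • (U i).indicator (fun _ => (1 : ℝ))) v := by
  classical
  have hU : ∀ i j, U i ⊆ U j ∨ U j ⊆ U i := fun i j => by
    rcases lt_trichotomy i j with h | rfl | h
    exacts [.inl (hchain i j h).subset, .inl subset_rfl, .inr (hchain j i h).subset]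
  obtain ⟨aₘ, haₘ⟩ := Finite.exists_max (v - y)
  obtain ⟨bₘ, hbₘ⟩ := Finite.exists_min (v - y)
  obtain ⟨a₀, ha₀, hfew⟩ := exists_mem_fewest_memberships_of_total hU
    (S := ({a | (v - y) a = (v - y) aₘ} : Finset _)) ⟨aₘ, by simp⟩
  obtain ⟨b₀, hb₀, hmost⟩ := exists_mem_most_memberships_of_total hU
    (S := ({a | (v - y) a = (v - y) bₘ} : Finset _)) ⟨bₘ, by simp⟩
  simp only [mem_filter, mem_univ, true_and] at ha₀ hb₀
  obtain ⟨δ₁, hδ₁, hgap₁⟩ := Finite.exists_pos_le_of_pos fun a => (v - y) a₀ - (v - y) a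
  obtain ⟨δ₂, hδ₂, hgap₂⟩ := Finite.exists_pos_le_of_pos fun a => (v - y) a - (v - y) b₀
  refine ⟨min δ₁ δ₂, lt_min hδ₁ hδ₂, fun t ht htδ => ?_⟩
  have key : ∀ w ∈ chainWeights U,
      dtr q (y + t • w) v = (v - y) a₀ - (v - y) b₀ - t * (w a₀ - w b₀) := by
    rintro w ⟨hw, hmono⟩
    exact dtr_add_smul_eq hw ht.le (fun a => ha₀ ▸ haₘ a) (fun a => hb₀ ▸ hbₘ a)
      (fun a ha => hmono _ _ (hfew a (by simpa using ha.trans ha₀)))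
      (fun a ha => hmono _ _ (hmost a (by simpa using ha.trans hb₀)))
      (fun a ha => (htδ.le.trans (min_le_left _ _)).trans (hgap₁ a (sub_pos.2 ha)))
      (fun a ha => (htδ.le.trans (min_le_right _ _)).trans (hgap₂ a (sub_pos.2 ha)))
  rw [key _ ((convex_chainWeights U).sum_mem (fun i _ => hlam i) hsum
    fun i _ => indicator_one_mem_chainWeights U i)]
  simp_rw [key _ (indicator_one_mem_chainWeights U _)]
  simp only [Finset.sum_apply, Pi.smul_apply, smul_eq_mul, mul_sub, Finset.sum_sub_distrib,
    ← Finset.sum_mul, hsum, one_mul, Finset.mul_sum, mul_left_comm t]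

theorem stmt13 (q k : ℕ) [NeZero q] (v y : Fin q → ℝ)
    (U : Fin k → Set (Fin q))
    -- `∅ ⊂ U 1 ⊂ U 2 ⊂ ⋯ ⊂ U k ⊂ [q]`: a strictly increasing chain of
    -- nonempty proper subsets
    (hchain : ∀ i j : Fin k, i < j → U i ⊂ U j)
    (hne : ∀ i, (U i).Nonempty) (hproper : ∀ i, U i ≠ Set.univ)
    (lam : Fin k → ℝ) (hlam : ∀ i, 0 ≤ lam i) (hsum : ∑ i, lam i = 1) :
    ∃ t₀ > (0 : ℝ), ∀ t : ℝ, 0 < t → t < t₀ →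
      dtr q (y + t • ∑ i, lam i • (U i).indicator (fun _ => (1 : ℝ))) v =
        ∑ i, lam i * dtr q (y + t • (U i).indicator (fun _ => (1 : ℝ))) v :=
  stmt13_general q k v y U hchain lam hlam hsum
end

section
/- Let x, y ∈ R^q with x ≠ y modulo the all-ones vector, and let D = d_tr(x,y). Let U_i be the set of coordinates on which x − y takes one of its i largest distinct values, for i = 1, ..., k where x − y takes k+1 distinct values. Then x − y = c·1 + Σ_{i=1}^k γ_i·1_{U_i} for some constant c, where γ_i = max^i(x−y) − max^{i+1}(x−y) > 0 (the i-th and (i+1)-th largest distinct values), and Σ_{i=1}^k γ_i = D. -/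
/-- The distinct values of `x − y`, sorted in increasing order. -/
noncomputable def sortedVals (q : ℕ) (x y : Fin q → ℝ) : List ℝ :=
  (Finset.image (fun a => x a - y a) Finset.univ).sort (· ≤ ·)

/-- `k`: one less than the number of distinct values of `x − y`. -/
noncomputable def numGaps (q : ℕ) (x y : Fin q → ℝ) : ℕ :=
  (Finset.image (fun a => x a - y a) Finset.univ).card - 1

open Finset

section Negation

variable {ι α : Type*} [AddCommGroup α] [LinearOrder α] [IsOrderedAddMonoid α]
  {s : Finset ι} (hs : s.Nonempty) (f : ι → α)

theorem Finset.sup'_neg_eq_neg_inf' : s.sup' hs (fun i => -f i) = -s.inf' hs f := by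
  refine le_antisymm (sup'_le _ _ fun i hi => neg_le_neg (inf'_le f hi)) ?_
  obtain ⟨i, hi, hfi⟩ := s.exists_mem_eq_inf' hs f
  exact hfi ▸ le_sup' (fun i => -f i) hi

theorem Finset.inf'_neg_eq_neg_sup' : s.inf' hs (fun i => -f i) = -s.sup' hs f := by
  refine le_antisymm ?_ (le_inf' _ _ fun i hi => neg_le_neg (le_sup' f hi))
  obtain ⟨i, hi, hfi⟩ := s.exists_mem_eq_sup' hs f
  exact hfi ▸ inf'_le (fun i => -f i) hi

end Negation

namespace List.SortedLT

variable {α : Type*} [Inhabited α] {l : List α}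

theorem getElem!_lt_getElem! [LinearOrder α] (hl : l.SortedLT) {i j : ℕ} (hij : i < j)
    (hj : j < l.length) : l[i]! < l[j]! := by
  rw [getElem!_pos l i (hij.trans hj), getElem!_pos l j hj]
  exact hl.getElem_lt_getElem_iff.2 hij

theorem getElem!_le_getElem!_iff [LinearOrder α] (hl : l.SortedLT) {i j : ℕ}
    (hi : i < l.length) (hj : j < l.length) : l[i]! ≤ l[j]! ↔ i ≤ j := by
  rw [getElem!_pos l i hi, getElem!_pos l j hj]
  exact hl.getElem_le_getElem_iff

theorem sum_gaps_of_le_eq_sub [AddCommGroup α] [LinearOrder α] (hl : l.SortedLT) {j : ℕ}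
    (hj : j < l.length) :
    ∑ i ∈ Finset.range (l.length - 1), (if l[i + 1]! ≤ l[j]! then l[i + 1]! - l[i]! else 0) =
      l[j]! - l[0]! := by
  rw [← Finset.sum_filter, ← Finset.sum_range_sub (fun i => l[i]!)]
  congr 1
  ext i
  simp only [Finset.mem_filter, Finset.mem_range]
  constructor
  · rintro ⟨hi, hle⟩
    exact (hl.getElem!_le_getElem!_iff (by omega) hj).1 hle
  · intro hij
    exact ⟨by omega, (hl.getElem!_le_getElem!_iff (by omega) hj).2 hij⟩

end List.SortedLT

section SortedVals

variable (q : ℕ) (x y : Fin q → ℝ)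

theorem sortedVals_sortedLT : (sortedVals q x y).SortedLT :=
  Finset.sortedLT_sort _

theorem mem_sortedVals (a : Fin q) : x a - y a ∈ sortedVals q x y := by
  rw [sortedVals, mem_sort]
  exact mem_image_of_mem _ (mem_univ a)

theorem image_sub_nonempty [NeZero q] : (univ.image fun a => x a - y a).Nonempty :=
  univ_nonempty.image _

theorem length_sortedVals [NeZero q] : (sortedVals q x y).length = numGaps q x y + 1 := by
  have := (image_sub_nonempty q x y).card_pos
  rw [sortedVals, length_sort, numGaps]
  omega

theorem getElem!_zero_sortedVals [NeZero q] :
    (sortedVals q x y)[0]! = univ.inf' univ_nonempty fun a => x a - y a := by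
  calc (sortedVals q x y)[0]!
      = (sortedVals q x y)[0]'(by rw [length_sortedVals]; omega) := getElem!_pos _ _ _
    _ = (univ.image fun a => x a - y a).min' (image_sub_nonempty q x y) :=
        min'_eq_sorted_zero.symm
    _ = univ.inf' univ_nonempty fun a => x a - y a := by
        rw [min'_eq_inf', inf'_image]
        rfl

theorem getElem!_numGaps_sortedVals [NeZero q] :
    (sortedVals q x y)[numGaps q x y]! = univ.sup' univ_nonempty fun a => x a - y a := by
  have hlen := length_sortedVals q x y
  calc (sortedVals q x y)[numGaps q x y]!
      = (sortedVals q x y)[(sortedVals q x y).length - 1] := by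
        rw [getElem!_pos _ _ (by omega)]
        simp only [hlen, Nat.add_sub_cancel]
    _ = (univ.image fun a => x a - y a).max' (image_sub_nonempty q x y) :=
        max'_eq_sorted_last.symm
    _ = univ.sup' univ_nonempty fun a => x a - y a := by
        rw [max'_eq_sup', sup'_image]
        rfl

theorem dtr_eq_sup'_sub_inf' [NeZero q] :
    dtr q x y = (univ.sup' univ_nonempty fun a => x a - y a) -
      univ.inf' univ_nonempty fun a => x a - y a := by
  simp only [dtr, ← neg_sub (x _), sup'_neg_eq_neg_inf', inf'_neg_eq_neg_sup']
  ring

end SortedVals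

theorem stmt17_general (q : ℕ) [NeZero q] (x y : Fin q → ℝ) :
    -- with `l` the sorted distinct values, the `i`-th largest distinct value is
    -- `l[k−(i−1)]`; the gap `γ_i = max^i(x−y) − max^{i+1}(x−y)` is `l[k−i+1] − l[k−i]`,
    -- and `U_i = {a : x a − y a ≥ max^i}`.  Re-indexing over ascending positions:
    (∀ i < numGaps q x y,
        0 < (sortedVals q x y)[i + 1]! - (sortedVals q x y)[i]!) ∧
    (∑ i ∈ Finset.range (numGaps q x y),
        ((sortedVals q x y)[i + 1]! - (sortedVals q x y)[i]!)) = dtr q x y ∧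
    ∃ c : ℝ, ∀ a : Fin q,
      x a - y a = c + ∑ i ∈ Finset.range (numGaps q x y),
        ((sortedVals q x y)[i + 1]! - (sortedVals q x y)[i]!) *
          ({b : Fin q | (sortedVals q x y)[i + 1]! ≤ x b - y b}).indicator
            (fun _ => (1 : ℝ)) a := by
  set l := sortedVals q x y
  have hl : l.SortedLT := sortedVals_sortedLT q x y
  have hlen : l.length = numGaps q x y + 1 := length_sortedVals q x y
  refine ⟨fun i hi => sub_pos.2 (hl.getElem!_lt_getElem! (by omega) (by omega)), ?_, l[0]!,
    fun a => ?_⟩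
  · rw [sum_range_sub (fun i => l[i]!), getElem!_numGaps_sortedVals, getElem!_zero_sortedVals,
      dtr_eq_sup'_sub_inf']
  · obtain ⟨j, hj, hja⟩ := List.mem_iff_getElem.1 (mem_sortedVals q x y a)
    rw [← getElem!_pos l j hj] at hja
    simp only [Set.indicator_apply, Set.mem_ofPred_eq, mul_ite, mul_one, mul_zero, ← hja]
    have hsum := hl.sum_gaps_of_le_eq_sub hj
    rw [hlen, Nat.add_sub_cancel] at hsum
    rw [hsum]
    ring

theorem stmt17 (q : ℕ) [NeZero q] (x y : Fin q → ℝ)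
    -- `x ≠ y` modulo the all-ones vector, i.e. `x − y` is non-constant
    (hxy : ∃ a b : Fin q, x a - y a ≠ x b - y b) :
    -- with `l` the sorted distinct values, the `i`-th largest distinct value is
    -- `l[k−(i−1)]`; the gap `γ_i = max^i(x−y) − max^{i+1}(x−y)` is `l[k−i+1] − l[k−i]`,
    -- and `U_i = {a : x a − y a ≥ max^i}`.  Re-indexing over ascending positions:
    (∀ i < numGaps q x y,
        0 < (sortedVals q x y)[i + 1]! - (sortedVals q x y)[i]!) ∧
    (∑ i ∈ Finset.range (numGaps q x y),
        ((sortedVals q x y)[i + 1]! - (sortedVals q x y)[i]!)) = dtr q x y ∧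
    ∃ c : ℝ, ∀ a : Fin q,
      x a - y a = c + ∑ i ∈ Finset.range (numGaps q x y),
        ((sortedVals q x y)[i + 1]! - (sortedVals q x y)[i]!) *
          ({b : Fin q | (sortedVals q x y)[i + 1]! ≤ x b - y b}).indicator
            (fun _ => (1 : ℝ)) a :=
  stmt17_general q x y
end
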